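/- Let C be a cochain complex of R-modules of the form ⋯ → P^{n-1} --(a₁,a₂)--> P^n ⊕ Q --[[b₁,b₂],[b₃,1]]--> P^{n+1} ⊕ Q --(c₁;c₂)--> P^{n+2} → ⋯. Then in the homotopy category of cochain complexes, C is isomorphic to the complex P' : ⋯ → P^{n-1} --a₁--> P^n --(b₁ - b₂∘b₃)--> P^{n+1} --c₁--> P^{n+2} → ⋯. -/

import Mathlib

/-!
In degrees n, n+1 the complex C contains the summand Q --id--> Q, which is contractible.
Changing bases by (x, q) ↦ (x, q + b₂ x) on P2 ⊕ Q and (y, q) ↦ (y - b₃ q, q) on P3 ⊕ Q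
splits it off, leaving P'. Concretely, f projects away from Q, with the correction -b₃ in
degree n+1; g includes P', with the correction -b₂ in degree n; f ∘ g = id on the nose, and
id_C - g ∘ f is the null-homotopy given by the projection onto Q from degree n+1 to degree n.
-/

namespace LinearMap

variable {R : Type*} [Ring R] {M N L : Type*} [AddCommGroup M] [Module R M]
  [AddCommGroup N] [Module R N] [AddCommGroup L] [Module R L]

theorem eq_neg_comp_of_coprod_id_comp_prod_eq_zero {f : M →ₗ[R] N} {g : L →ₗ[R] M}
    {k : L →ₗ[R] N} (h : (f.coprod id) ∘ₗ (g.prod k) = 0) : k = -(f ∘ₗ g) := by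
  rw [coprod_comp_prod, id_comp] at h
  exact eq_neg_of_add_eq_zero_right h

theorem eq_neg_comp_of_coprod_comp_prod_id_eq_zero {f : M →ₗ[R] N} {g : L →ₗ[R] M}
    {k : L →ₗ[R] N} (h : (f.coprod k) ∘ₗ (g.prod id) = 0) : k = -(f ∘ₗ g) := by
  rw [coprod_comp_prod, comp_id] at h
  exact eq_neg_of_add_eq_zero_right h

end LinearMap

theorem stmt3 (R : Type*) [Ring R]
    (P1 P2 P3 P4 Q : Type*)
    [AddCommGroup P1] [Module R P1] [AddCommGroup P2] [Module R P2]
    [AddCommGroup P3] [Module R P3] [AddCommGroup P4] [Module R P4]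
    [AddCommGroup Q] [Module R Q]
    (a₁ : P1 →ₗ[R] P2) (a₂ : P1 →ₗ[R] Q)
    (b₁ : P2 →ₗ[R] P3) (b₂ : P2 →ₗ[R] Q) (b₃ : Q →ₗ[R] P3)
    (c₁ : P3 →ₗ[R] P4) (c₂ : Q →ₗ[R] P4)
    (hdd₁ : ((LinearMap.coprod b₁ b₃).prod
        (LinearMap.coprod b₂ LinearMap.id)).comp (a₁.prod a₂) = 0)
    (hdd₂ : (LinearMap.coprod c₁ c₂).comp
        ((LinearMap.coprod b₁ b₃).prod (LinearMap.coprod b₂ LinearMap.id)) = 0) :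
    -- d_C^n and d_{P'}^n
    ∃ (f₂ : (P2 × Q) →ₗ[R] P2) (f₃ : (P3 × Q) →ₗ[R] P3)
      (g₂ : P2 →ₗ[R] P2 × Q) (g₃ : P3 →ₗ[R] P3 × Q)
      (hC : (P3 × Q) →ₗ[R] P2 × Q) (hP : P3 →ₗ[R] P2),
      -- f : C → P' is a chain map (identity outside degrees n, n+1)
      f₂.comp (a₁.prod a₂) = a₁ ∧
      f₃.comp ((LinearMap.coprod b₁ b₃).prod (LinearMap.coprod b₂ LinearMap.id))
        = (b₁ - b₃.comp b₂).comp f₂ ∧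
      c₁.comp f₃ = LinearMap.coprod c₁ c₂ ∧
      -- g : P' → C is a chain map (identity outside degrees n, n+1)
      g₂.comp a₁ = a₁.prod a₂ ∧
      g₃.comp (b₁ - b₃.comp b₂)
        = ((LinearMap.coprod b₁ b₃).prod (LinearMap.coprod b₂ LinearMap.id)).comp g₂ ∧
      (LinearMap.coprod c₁ c₂).comp g₃ = c₁ ∧
      -- hC is a homotopy id_C ≃ g ∘ f (supported in the window)
      LinearMap.id - g₂.comp f₂
        = hC.comp ((LinearMap.coprod b₁ b₃).prod (LinearMap.coprod b₂ LinearMap.id)) ∧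
      LinearMap.id - g₃.comp f₃
        = ((LinearMap.coprod b₁ b₃).prod (LinearMap.coprod b₂ LinearMap.id)).comp hC ∧
      -- hP is a homotopy id_{P'} ≃ f ∘ g (supported in the window)
      LinearMap.id - f₂.comp g₂ = hP.comp (b₁ - b₃.comp b₂) ∧
      LinearMap.id - f₃.comp g₃ = (b₁ - b₃.comp b₂).comp hP := by
  have ha₂ : a₂ = -(b₂ ∘ₗ a₁) := by
    have h := congrArg (LinearMap.snd R P3 Q ∘ₗ ·) hdd₁
    rw [LinearMap.comp_zero, ← LinearMap.comp_assoc, LinearMap.snd_prod] at h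
    exact LinearMap.eq_neg_comp_of_coprod_id_comp_prod_eq_zero h
  have hc₂ : c₂ = -(c₁ ∘ₗ b₃) := by
    have h := congrArg (· ∘ₗ LinearMap.inr R P2 Q) hdd₂
    rw [LinearMap.zero_comp, LinearMap.comp_assoc, LinearMap.prod_comp, LinearMap.coprod_inr,
      LinearMap.coprod_inr] at h
    exact LinearMap.eq_neg_comp_of_coprod_comp_prod_id_eq_zero h
  subst ha₂ hc₂
  refine ⟨LinearMap.fst R P2 Q, LinearMap.id.coprod (-b₃),
    LinearMap.id.prod (-b₂), LinearMap.id.prod 0,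
    (0 : P3 × Q →ₗ[R] P2).prod (LinearMap.snd R P3 Q), 0, ?_⟩
  refine ⟨?_, ?_, ?_, ?_, ?_, ?_, ?_, ?_, ?_, ?_⟩ <;> ext <;> simp [sub_eq_add_neg]
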